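/- arXiv:2510.15787 — 5 statements merged into one kernel-verified Lean document; each statement's English description precedes it below -/
import Mathlib

section
/- In semiclassical JT gravity, the two-dimensional QNEC implies restricted quantum focusing: if Φ > 0 and Θ' = −8πG T/Φ − θ² + 4G(S''/Φ − θS'/Φ) with Θ = θ + 4G S'/Φ, θ = Φ'/Φ, and the QNEC 2πT ≥ S'' holds, then Θ' ≤ −θΘ; in particular Θ = 0 implies Θ' ≤ 0. -/
open Real

/-- In semiclassical JT gravity, the two-dimensional QNEC implies restricted quantum focusing.
Along a null geodesic with affine parameter, let `Φ > 0` be the dilaton, `T` the null-null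
stress tensor component and `S` the matter entropy; with classical expansion `θ = Φ'/Φ` and
quantum expansion `Θ = θ + 4G S'/Φ`, the dilaton equation of motion `Φ'' = −8πG T` together
with the QNEC `2πT ≥ S''` imply `Θ' ≤ −θΘ`; in particular `Θ = 0` implies `Θ' ≤ 0`. -/
theorem restricted_qfc_of_qnec_JT
    (G : ℝ) (hG : 0 < G) (Φ T S : ℝ → ℝ)
    (hΦ : ContDiff ℝ 2 Φ) (hS : ContDiff ℝ 2 S)
    (hΦpos : ∀ l : ℝ, 0 < Φ l)
    (heom : ∀ l : ℝ, deriv (deriv Φ) l = -(8 * π * G) * T l)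
    (hqnec : ∀ l : ℝ, 2 * π * T l ≥ deriv (deriv S) l)
    (l : ℝ) :
    deriv (fun t => deriv Φ t / Φ t + 4 * G * deriv S t / Φ t) l
        ≤ -(deriv Φ l / Φ l) * (deriv Φ l / Φ l + 4 * G * deriv S l / Φ l) ∧
    (deriv Φ l / Φ l + 4 * G * deriv S l / Φ l = 0 →
      deriv (fun t => deriv Φ t / Φ t + 4 * G * deriv S t / Φ t) l ≤ 0) := by
  have hΦd : Differentiable ℝ Φ := hΦ.differentiable (by norm_num)
  have hSd : Differentiable ℝ S := hS.differentiable (by norm_num)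
  have hΦ2 : ContDiff ℝ (1+1) Φ := by norm_num [hΦ]
  have hS2 : ContDiff ℝ (1+1) S := by norm_num [hS]
  have hΦ' : Differentiable ℝ (deriv Φ) :=
    ((contDiff_succ_iff_deriv.mp hΦ2).2.2).differentiable (by norm_num)
  have hS' : Differentiable ℝ (deriv S) :=
    ((contDiff_succ_iff_deriv.mp hS2).2.2).differentiable (by norm_num)
  have hne : Φ l ≠ 0 := (hΦpos l).ne'
  have h1 : HasDerivAt (deriv Φ) (deriv (deriv Φ) l) l := (hΦ' l).hasDerivAt
  have h2 : HasDerivAt Φ (deriv Φ l) l := (hΦd l).hasDerivAt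
  have h3 : HasDerivAt (deriv S) (deriv (deriv S) l) l := (hS' l).hasDerivAt
  have hf : HasDerivAt (fun t => deriv Φ t / Φ t + 4 * G * deriv S t / Φ t)
      ((deriv (deriv Φ) l * Φ l - deriv Φ l * deriv Φ l) / Φ l ^ 2 +
       ((4 * G * deriv (deriv S) l) * Φ l - 4 * G * deriv S l * deriv Φ l) / Φ l ^ 2) l := by
    exact (h1.div h2 hne).add (((h3.const_mul (4 * G)).div h2 hne))
  rw [hf.deriv]
  have hkey : deriv (deriv Φ) l + 4 * G * deriv (deriv S) l ≤ 0 := by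
    have := hqnec l
    rw [heom l]
    nlinarith [hG]
  have hP := hΦpos l
  constructor
  · have hrhs : -(deriv Φ l / Φ l) * (deriv Φ l / Φ l + 4 * G * deriv S l / Φ l)
        = (-(deriv Φ l * deriv Φ l) - 4 * G * deriv S l * deriv Φ l) / Φ l ^ 2 := by
      field_simp; ring
    rw [hrhs, ← add_div]
    gcongr ?_ / _
    nlinarith [mul_nonpos_of_nonpos_of_nonneg hkey hP.le]
  · intro h0
    rw [← add_div, div_le_iff₀ (by positivity : (0:ℝ) < Φ l ^ 2)]
    have h0' : deriv Φ l + 4 * G * deriv S l = 0 := by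
      have h : (deriv Φ l + 4 * G * deriv S l) / Φ l = 0 := by
        rw [← h0]; ring
      field_simp at h; linarith [h]
    have h5 : 4 * G * deriv S l * deriv Φ l = -(deriv Φ l * deriv Φ l) := by
      have h4 : 4 * G * deriv S l = -(deriv Φ l) := by linarith
      rw [h4]; ring
    nlinarith [mul_nonpos_of_nonpos_of_nonneg hkey hP.le, h5]
end

section
/- In the Bunch–Davies state of half-reduction de Sitter JT gravity, the quantity S'' + (6/c)(S')² vanishes along any null ray, where S(x⁺,x⁻) = (c/6) ln Φ*(x⁺,x⁻) + const and Φ* = φ_r (1 + Λx⁺x⁻)/(1 − Λx⁺x⁻), with derivatives taken along x⁺ at fixed x⁻ with respect to an affine parameter satisfying dx⁺/dλ = C(1 − Λx⁺x⁻)²/4. -/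
open Real Filter

lemma inner_hasDeriv (Λ φr c K v : ℝ) (hφr : 0 < φr) (w : ℝ)
    (h1 : 0 < 1 + Λ * w * v) (h2 : 0 < 1 - Λ * w * v) :
    HasDerivAt (fun w' => c / 6 * Real.log (φr * (1 + Λ * w' * v) / (1 - Λ * w' * v)) + K)
      (c / 6 * (2 * (Λ * v) / ((1 + Λ * w * v) * (1 - Λ * w * v)))) w := by
  have hbase : HasDerivAt (fun w' : ℝ => Λ * w' * v) (Λ * v) w := by
    simpa using ((hasDerivAt_id w).const_mul Λ).mul_const v
  have hf : HasDerivAt (fun w' => φr * (1 + Λ * w' * v)) (φr * (Λ * v)) w :=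
    (hbase.const_add 1).const_mul φr
  have hg : HasDerivAt (fun w' : ℝ => 1 - Λ * w' * v) (-(Λ * v)) w := by
    simpa using hbase.const_sub 1
  have hdiv := hf.div hg h2.ne'
  have hne : φr * (1 + Λ * w * v) / (1 - Λ * w * v) ≠ 0 :=
    (div_pos (mul_pos hφr h1) h2).ne'
  have hlog := hdiv.log hne
  have := (hlog.const_mul (c / 6)).add_const K
  refine this.congr_deriv ?_
  simp only [Pi.div_apply]
  field_simp
  ring

/-- In the Bunch–Davies state of half-reduction de Sitter JT gravity, the quantity
`S'' + (6/c)(S')²` vanishes along any null ray, where `S = (c/6) ln Φ* + K` with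
`Φ* = φ_r (1 + Λx⁺x⁻)/(1 − Λx⁺x⁻)`, and primes denote derivatives along `x⁺` at fixed `x⁻`
with respect to an affine parameter satisfying `dx⁺/dλ = k⁺ = C(1 − Λx⁺x⁻)²/4`. -/
theorem bunch_davies_entropy_identity
    (Λ φr c C K u v : ℝ) (hφr : 0 < φr) (hc : 0 < c) (hC : C ≠ 0)
    (hconf : 0 < 1 - Λ * u * v)
    (hΦ : 0 < φr * (1 + Λ * u * v) / (1 - Λ * u * v)) :
    (fun w => C * (1 - Λ * w * v) ^ 2 / 4) u *
        deriv (fun w => (C * (1 - Λ * w * v) ^ 2 / 4) *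
          deriv (fun w' => c / 6 * Real.log (φr * (1 + Λ * w' * v) / (1 - Λ * w' * v)) + K) w) u
      + (6 / c) * ((fun w => C * (1 - Λ * w * v) ^ 2 / 4) u *
          deriv (fun w' => c / 6 * Real.log (φr * (1 + Λ * w' * v) / (1 - Λ * w' * v)) + K) u) ^ 2
      = 0 := by
  have h1u : 0 < 1 + Λ * u * v := by
    by_contra h
    push_neg at h
    have : φr * (1 + Λ * u * v) ≤ 0 := mul_nonpos_of_nonneg_of_nonpos hφr.le h
    have := div_nonpos_of_nonpos_of_nonneg this hconf.le
    linarith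
  -- eventually both factors positive
  have hcont1 : Continuous fun w : ℝ => 1 + Λ * w * v :=
    continuous_const.add ((continuous_const.mul continuous_id).mul continuous_const)
  have hcont2 : Continuous fun w : ℝ => 1 - Λ * w * v :=
    continuous_const.sub ((continuous_const.mul continuous_id).mul continuous_const)
  have hopen : IsOpen {w : ℝ | 0 < 1 + Λ * w * v ∧ 0 < 1 - Λ * w * v} :=
    (isOpen_lt continuous_const hcont1).inter (isOpen_lt continuous_const hcont2)
  have hev : ∀ᶠ w in nhds u, 0 < 1 + Λ * w * v ∧ 0 < 1 - Λ * w * v :=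
    hopen.eventually_mem ⟨h1u, hconf⟩
  -- eventually F = G
  have hFG : (fun w => (C * (1 - Λ * w * v) ^ 2 / 4) *
        deriv (fun w' => c / 6 * Real.log (φr * (1 + Λ * w' * v) / (1 - Λ * w' * v)) + K) w)
      =ᶠ[nhds u] (fun w => C * c * (Λ * v) * (1 - Λ * w * v) / (12 * (1 + Λ * w * v))) := by
    filter_upwards [hev] with w ⟨hw1, hw2⟩
    rw [(inner_hasDeriv Λ φr c K v hφr w hw1 hw2).deriv]
    field_simp
    ring
  have hderivF := hFG.deriv_eq
  -- derivative of G at u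
  have hbase : HasDerivAt (fun w : ℝ => Λ * w * v) (Λ * v) u := by
    simpa using ((hasDerivAt_id u).const_mul Λ).mul_const v
  have hnum : HasDerivAt (fun w => C * c * (Λ * v) * (1 - Λ * w * v))
      (C * c * (Λ * v) * (-(Λ * v))) u := by
    simpa using (hbase.const_sub 1).const_mul (C * c * (Λ * v))
  have hden : HasDerivAt (fun w : ℝ => 12 * (1 + Λ * w * v)) (12 * (Λ * v)) u :=
    (hbase.const_add 1).const_mul 12
  have hden0 : (12 : ℝ) * (1 + Λ * u * v) ≠ 0 := by positivity
  have hG := hnum.div hden hden0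
  rw [hderivF, (show HasDerivAt (fun w => C * c * (Λ * v) * (1 - Λ * w * v) / (12 * (1 + Λ * w * v))) _ u from hG).deriv,
    (inner_hasDeriv Λ φr c K v hφr u h1u hconf).deriv]
  field_simp
  ring
end

section
/- For the Unruh–de Sitter dilaton Φ(x⁺,x⁻) = φ₀ + φ_r(1+x⁺x⁻)/(1−x⁺x⁻) + (cG/6)(1 − ((1+x⁺x⁻)/(1−x⁺x⁻)) ln x⁺) with x⁺ > 0 and 1 − x⁺x⁻ > 0, one has ∂₊Φ ≤ 0 exactly when δ₋(x⁺) ≤ x⁻ ≤ δ₊(x⁺), where δ_±(x⁺) = (1/x⁺)(ln(x⁺/x₀⁺) ± √(1 + (ln(x⁺/x₀⁺))²)) and x₀⁺ = e^{6φ_r/(cG)}. -/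
open Real

/-- The threshold value `x₀⁺ = e^{6φ_r/(cG)}`. -/
noncomputable def x0plus (φr c G : ℝ) : ℝ := Real.exp (6 * φr / (c * G))

/-- For the Unruh–de Sitter dilaton
`Φ(x⁺,x⁻) = φ₀ + φ_r(1+x⁺x⁻)/(1−x⁺x⁻) + (cG/6)(1 − ((1+x⁺x⁻)/(1−x⁺x⁻)) ln x⁺)`
with `x⁺ > 0` and `1 − x⁺x⁻ > 0`, one has `∂₊Φ ≤ 0` exactly when
`δ₋(x⁺) ≤ x⁻ ≤ δ₊(x⁺)`, where
`δ_±(x⁺) = (1/x⁺)(ln(x⁺/x₀⁺) ± √(1 + (ln(x⁺/x₀⁺))²))` and `x₀⁺ = e^{6φ_r/(cG)}`. -/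
theorem unruh_de_sitter_contracting_region
    (φ0 φr c G u v : ℝ) (hφ0 : 0 ≤ φ0) (hφr : 0 < φr) (hc : 0 < c) (hG : 0 < G)
    (hu : 0 < u) (hconf : 0 < 1 - u * v) :
    deriv (fun w => φ0 + φr * (1 + w * v) / (1 - w * v) +
        c * G / 6 * (1 - (1 + w * v) / (1 - w * v) * Real.log w)) u ≤ 0
      ↔ ((1 / u) * (Real.log (u / x0plus φr c G) -
            Real.sqrt (1 + Real.log (u / x0plus φr c G) ^ 2)) ≤ v ∧
          v ≤ (1 / u) * (Real.log (u / x0plus φr c G) +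
            Real.sqrt (1 + Real.log (u / x0plus φr c G) ^ 2))) := by
  have hne : (1 - u * v) ≠ 0 := ne_of_gt hconf
  have hune : u ≠ 0 := ne_of_gt hu
  set L : ℝ := Real.log (u / x0plus φr c G) with hL
  set s : ℝ := Real.sqrt (1 + L ^ 2) with hs
  have hLs : L = Real.log u - 6 * φr / (c * G) := by
    rw [hL, x0plus, Real.log_div hune (Real.exp_ne_zero _), Real.log_exp]
  have hs0 : 0 ≤ s := Real.sqrt_nonneg _
  have hs2 : s ^ 2 = 1 + L ^ 2 := Real.sq_sqrt (by positivity)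
  -- derivative computation
  have hA : HasDerivAt (fun w : ℝ => 1 + w * v) v u := by
    simpa using ((hasDerivAt_id u).mul_const v).const_add 1
  have hB : HasDerivAt (fun w : ℝ => 1 - w * v) (-v) u := by
    simpa using ((hasDerivAt_id u).mul_const v).const_sub 1
  have hC : HasDerivAt (fun w : ℝ => φr * (1 + w * v)) (φr * v) u := hA.const_mul φr
  have h1 : HasDerivAt (fun w : ℝ => φr * (1 + w * v) / (1 - w * v))
      ((φr * v * (1 - u * v) - φr * (1 + u * v) * (-v)) / (1 - u * v) ^ 2) u :=
    hC.div hB hne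
  have h2 : HasDerivAt (fun w : ℝ => (1 + w * v) / (1 - w * v))
      ((v * (1 - u * v) - (1 + u * v) * (-v)) / (1 - u * v) ^ 2) u := hA.div hB hne
  have h3 : HasDerivAt (fun w : ℝ => (1 + w * v) / (1 - w * v) * Real.log w)
      ((v * (1 - u * v) - (1 + u * v) * (-v)) / (1 - u * v) ^ 2 * Real.log u +
        (1 + u * v) / (1 - u * v) * u⁻¹) u :=
    h2.mul (Real.hasDerivAt_log hune)
  have h4 : HasDerivAt (fun w : ℝ => φ0 + φr * (1 + w * v) / (1 - w * v) +
      c * G / 6 * (1 - (1 + w * v) / (1 - w * v) * Real.log w))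
      ((φr * v * (1 - u * v) - φr * (1 + u * v) * (-v)) / (1 - u * v) ^ 2 +
        c * G / 6 * (-((v * (1 - u * v) - (1 + u * v) * (-v)) / (1 - u * v) ^ 2 * Real.log u +
          (1 + u * v) / (1 - u * v) * u⁻¹))) u :=
    (h1.const_add φ0).add ((h3.const_sub 1).const_mul (c * G / 6))
  rw [h4.deriv]
  -- rewrite the derivative as positive * quadratic
  have key : (φr * v * (1 - u * v) - φr * (1 + u * v) * (-v)) / (1 - u * v) ^ 2 +
        c * G / 6 * (-((v * (1 - u * v) - (1 + u * v) * (-v)) / (1 - u * v) ^ 2 * Real.log u +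
          (1 + u * v) / (1 - u * v) * u⁻¹)) =
      (c * G / 6) / (u * (1 - u * v) ^ 2) * ((u * v) ^ 2 - 2 * L * (u * v) - 1) := by
    rw [hLs]
    field_simp
    ring
  rw [key]
  have hpos : 0 < (c * G / 6) / (u * (1 - u * v) ^ 2) := by positivity
  have hquad : (c * G / 6) / (u * (1 - u * v) ^ 2) * ((u * v) ^ 2 - 2 * L * (u * v) - 1) ≤ 0 ↔
      (u * v) ^ 2 - 2 * L * (u * v) - 1 ≤ 0 := by
    constructor
    · intro h; nlinarith
    · intro h; exact mul_nonpos_of_nonneg_of_nonpos hpos.le h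
  rw [hquad]
  have hb1 : (1 / u) * (L - s) ≤ v ↔ L - s ≤ u * v := by
    rw [one_div, inv_mul_le_iff₀ hu]
  have hb2 : v ≤ (1 / u) * (L + s) ↔ u * v ≤ L + s := by
    rw [one_div]
    exact le_inv_mul_iff₀ hu
  rw [hb1, hb2]
  constructor
  · intro h
    constructor
    · nlinarith [sq_nonneg (u * v - L + s)]
    · nlinarith [sq_nonneg (u * v - L - s)]
  · rintro ⟨h1', h2'⟩
    nlinarith [mul_nonneg (sub_nonneg.2 h1') (sub_nonneg.2 h2')]
end

section
/- For a closed (n+1)-dimensional FLRW universe filled with a perfect fluid of index w ≠ w_c = −1 + 2/n, the continuity equation ρ' + n(a'/a)(ρ + wρ) = 0 implies ρ = C/a^{n(1+w)}, and the conformal-gauge Friedmann equation (a'/a)² = (a/a₀)^{n(w_c−w)} − 1 (with a₀ = (n(n−1)/(16πC))^{1/(n(w_c−w))}) is solved by a(η) = a₀ (sin(η/|γ|))^γ for η ∈ (0, |γ|π), where γ = 2/(n(w−w_c)). -/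
open Real Set

/-- The critical fluid index `w_c = −1 + 2/n`. -/
noncomputable def wcrit (n : ℕ) : ℝ := -1 + 2 / (n : ℝ)

/-- The exponent `γ = 2/(n(w − w_c))`. -/
noncomputable def gammaFLRW (n : ℕ) (w : ℝ) : ℝ := 2 / ((n : ℝ) * (w - wcrit n))

/-- The extremal scale factor value `a₀ = (n(n−1)/(16πC))^{1/(n(w_c−w))}`. -/
noncomputable def a0FLRW (n : ℕ) (w C : ℝ) : ℝ :=
  ((n : ℝ) * ((n : ℝ) - 1) / (16 * Real.pi * C)) ^ (1 / ((n : ℝ) * (wcrit n - w)))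

/-- The scale factor `a(η) = a₀ (sin(η/|γ|))^γ` of a closed FLRW universe. -/
noncomputable def aFLRW (n : ℕ) (w C η : ℝ) : ℝ :=
  a0FLRW n w C * Real.sin (η / |gammaFLRW n w|) ^ gammaFLRW n w

/-- For a closed `(n+1)`-dimensional FLRW universe filled with a perfect fluid of index
`w ≠ w_c = −1 + 2/n`: (i) the continuity equation `ρ' + n(a'/a)(ρ + wρ) = 0` implies
`ρ = C'/a^{n(1+w)}` for some constant `C'`; (ii) the conformal-gauge Friedmann equation
`(a'/a)² = (a/a₀)^{n(w_c−w)} − 1` is solved by `a(η) = a₀ (sin(η/|γ|))^γ` on `(0, |γ|π)`,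
where `γ = 2/(n(w−w_c))`. -/
theorem flrw_scale_factor
    (n : ℕ) (hn : 2 ≤ n) (w C : ℝ) (hw : w ∈ Icc (-1 : ℝ) 1) (hwc : w ≠ wcrit n)
    (hC : 0 < C) (t0 t1 : ℝ) (ht : t0 < t1) (ρ a : ℝ → ℝ)
    (ha : ∀ η ∈ Ioo t0 t1, 0 < a η)
    (hadiff : ∀ η ∈ Ioo t0 t1, DifferentiableAt ℝ a η)
    (hρdiff : ∀ η ∈ Ioo t0 t1, DifferentiableAt ℝ ρ η)
    (hcont : ∀ η ∈ Ioo t0 t1,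
      deriv ρ η + (n : ℝ) * (deriv a η / a η) * (ρ η + w * ρ η) = 0) :
    (∃ C' : ℝ, ∀ η ∈ Ioo t0 t1, ρ η = C' / a η ^ ((n : ℝ) * (1 + w))) ∧
    (∀ η ∈ Ioo 0 (|gammaFLRW n w| * Real.pi),
      (deriv (aFLRW n w C) η / aFLRW n w C η) ^ 2
        = (aFLRW n w C η / a0FLRW n w C) ^ ((n : ℝ) * (wcrit n - w)) - 1) := by
  have hn2 : (2:ℝ) ≤ (n:ℝ) := by exact_mod_cast hn
  have hn0 : (0:ℝ) < (n:ℝ) := by linarith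
  set k : ℝ := (n:ℝ) * (1 + w) with hk
  constructor
  · -- Part (i)
    set F : ℝ → ℝ := fun η => ρ η * a η ^ k with hF
    have hFd : ∀ η ∈ Ioo t0 t1, HasDerivAt F 0 η := by
      intro η hη
      have haη := ha η hη
      have ha' := (hadiff η hη).hasDerivAt
      have hρ' := (hρdiff η hη).hasDerivAt
      have hpow : HasDerivAt (fun t => a t ^ k) (k * a η ^ (k - 1) * deriv a η) η := by
        have h := (Real.hasDerivAt_rpow_const (p := k) (Or.inl haη.ne')).comp η ha'
        simpa [Function.comp_def, mul_comm, mul_assoc, mul_left_comm] using h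
      have hmul := hρ'.mul hpow
      have hzero : deriv ρ η * a η ^ k + ρ η * (k * a η ^ (k - 1) * deriv a η) = 0 := by
        have hc := hcont η hη
        have hder : deriv ρ η = -((n:ℝ) * (deriv a η / a η) * (ρ η + w * ρ η)) := by
          linarith
        have hak : a η ^ (k - 1) = a η ^ k / a η := by
          rw [Real.rpow_sub haη, Real.rpow_one]
        rw [hder, hak, hk]
        field_simp
        ring
      rw [hzero] at hmul; exact hmul
    refine ⟨F ((t0 + t1) / 2), fun η hη => ?_⟩
    have hmid : (t0 + t1) / 2 ∈ Ioo t0 t1 := ⟨by linarith, by linarith⟩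
    have hconst : ∀ x ∈ Ioo t0 t1, ∀ y ∈ Ioo t0 t1, x < y → F x = F y := by
      intro x hx y hy hxy
      have hsub : Icc x y ⊆ Ioo t0 t1 := fun z hz =>
        ⟨lt_of_lt_of_le hx.1 hz.1, lt_of_le_of_lt hz.2 hy.2⟩
      have hcontF : ContinuousOn F (Icc x y) := fun z hz =>
        ((hFd z (hsub hz)).differentiableAt.continuousAt).continuousWithinAt
      have hdiffF : DifferentiableOn ℝ F (Ioo x y) := fun z hz =>
        ((hFd z (hsub (Ioo_subset_Icc_self hz))).differentiableAt).differentiableWithinAt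
      obtain ⟨c, hc, hceq⟩ := exists_deriv_eq_slope F hxy hcontF hdiffF
      have : deriv F c = 0 := (hFd c (hsub (Ioo_subset_Icc_self hc))).deriv
      rw [this] at hceq
      have hyx : y - x ≠ 0 := sub_ne_zero.mpr hxy.ne'
      have := (div_eq_iff hyx).mp hceq.symm
      linarith
    have hFη : F η = F ((t0 + t1) / 2) := by
      rcases lt_trichotomy η ((t0 + t1) / 2) with h | h | h
      · exact hconst η hη _ hmid h
      · rw [h]
      · exact (hconst _ hmid η hη h).symm
    have hak : (0:ℝ) < a η ^ k := Real.rpow_pos_of_pos (ha η hη) k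
    rw [eq_div_iff hak.ne', ← hFη]
  · -- Part (ii)
    intro η hη
    obtain ⟨hη0, hη1⟩ := hη
    set g := gammaFLRW n w with hgdef
    have hD : (n:ℝ) * (w - wcrit n) ≠ 0 := mul_ne_zero hn0.ne' (sub_ne_zero.mpr hwc)
    have hg : g ≠ 0 := by
      rw [hgdef, gammaFLRW]; exact div_ne_zero two_ne_zero hD
    have hgabs : (0:ℝ) < |g| := abs_pos.mpr hg
    have hx0 : 0 < η / |g| := div_pos hη0 hgabs
    have hxπ : η / |g| < π := (div_lt_iff₀ hgabs).2 (by linarith [hη1])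
    have hs : 0 < Real.sin (η / |g|) := Real.sin_pos_of_pos_of_lt_pi hx0 hxπ
    set s := Real.sin (η / |g|) with hsdef
    have hbase : (0:ℝ) < (n:ℝ) * ((n:ℝ) - 1) / (16 * Real.pi * C) := by
      have hπ := Real.pi_pos
      apply div_pos
      · nlinarith
      · positivity
    have ha0 : 0 < a0FLRW n w C := Real.rpow_pos_of_pos hbase _
    have hd : HasDerivAt (aFLRW n w C)
        (a0FLRW n w C * (g * s ^ (g - 1) * (Real.cos (η / |g|) * |g|⁻¹))) η := by
      have h1 : HasDerivAt (fun t : ℝ => t / |g|) (|g|)⁻¹ η := by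
        simpa using (hasDerivAt_id η).div_const |g|
      have h2 : HasDerivAt (fun t : ℝ => Real.sin (t / |g|))
          (Real.cos (η / |g|) * |g|⁻¹) η := (Real.hasDerivAt_sin _).comp η h1
      have h3 : HasDerivAt (fun t : ℝ => Real.sin (t / |g|) ^ g)
          (g * s ^ (g - 1) * (Real.cos (η / |g|) * |g|⁻¹)) η :=
        by have := (Real.hasDerivAt_rpow_const (p := g) (Or.inl hs.ne')).comp η h2; exact this
      exact h3.const_mul (a0FLRW n w C)
    have hval : aFLRW n w C η = a0FLRW n w C * s ^ g := rfl
    rw [hd.deriv, hval]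
    have hexp : (n:ℝ) * (wcrit n - w) = -2 / g := by
      rw [hgdef, gammaFLRW]
      field_simp
      ring
    have hsg : (0:ℝ) < s ^ g := Real.rpow_pos_of_pos hs g
    have hs1 : s ^ (g - 1) = s ^ g / s := by
      rw [Real.rpow_sub hs, Real.rpow_one]
    have hcos : Real.cos (η / |g|) ^ 2 = 1 - s ^ 2 := by
      have h := Real.sin_sq_add_cos_sq (η / |g|)
      rw [hsdef]; linarith
    have hRHS : (a0FLRW n w C * s ^ g / a0FLRW n w C) ^ ((n:ℝ) * (wcrit n - w))
        = (s ^ 2)⁻¹ := by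
      rw [mul_comm, mul_div_assoc, div_self ha0.ne', mul_one, hexp,
        div_eq_mul_inv (-2:ℝ) g, ← Real.rpow_mul hs.le]
      have he : g * (-2 * g⁻¹) = -2 := by field_simp
      rw [he, show ((-2):ℝ) = -((2:ℕ):ℝ) by norm_num, Real.rpow_neg hs.le,
        Real.rpow_natCast]
    rw [hRHS, hs1]
    have key : a0FLRW n w C * (g * (s ^ g / s) * (Real.cos (η / |g|) * |g|⁻¹))
        / (a0FLRW n w C * s ^ g) = g * Real.cos (η / |g|) / (|g| * s) := by
      field_simp
    rw [key, div_pow, mul_pow, mul_pow, sq_abs, hcos]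
    field_simp
end

section
/- On the unit cosmological horizon of dS₃ (the cylinder {X₁² + X₂² = 1} in embedding coordinates, parametrized by conformal time σ and angle φ), the boundary of the past light cone of a point p = (σ₀, φ₀) with σ₀ > 0 consists of the segment φ = φ₀ for σσ₀ ≥ 0 together with the curve tan σ = −cot σ₀ · sin²((φ − φ₀)/2) for σσ₀ ≤ 0. -/
open Real

/-- Embedding of the (unit) cosmological horizon of dS₃, the cylinder `X₁² + X₂² = 1`, into
`ℝ^{1,3}`: the point with conformal time `σ` and angle `φ` is
`(X₀, X₁, X₂, X₃) = (tan σ, cos φ, sin φ, |tan σ|)`. -/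
noncomputable def horizonEmbed (σ φ : ℝ) : Fin 4 → ℝ :=
  ![Real.tan σ, Real.cos φ, Real.sin φ, |Real.tan σ|]

/-- The squared Minkowski interval between two points of `ℝ^{1,3}` (mostly plus signature,
coordinate `0` timelike). -/
noncomputable def minkIntervalSq (X Y : Fin 4 → ℝ) : ℝ :=
  -(X 0 - Y 0) ^ 2 + (X 1 - Y 1) ^ 2 + (X 2 - Y 2) ^ 2 + (X 3 - Y 3) ^ 2

set_option maxHeartbeats 2000000 in
/-- On the unit cosmological horizon of dS₃, the boundary of the past light cone of a point
`p = (σ₀, φ₀)` with `σ₀ > 0` — i.e. the set of horizon points null-separated from `p` —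
consists of the segment `φ = φ₀` for `σσ₀ ≥ 0` together with the curve
`tan σ = −cot σ₀ · sin²((φ − φ₀)/2)` for `σσ₀ ≤ 0`. -/
theorem horizon_lightcone_dS3
    (σ0 φ0 σ φ : ℝ) (hσ0 : σ0 ∈ Set.Ioo 0 (Real.pi / 2))
    (hσ : σ ∈ Set.Ioo (-(Real.pi / 2)) (Real.pi / 2)) (hφ : |φ - φ0| < 2 * Real.pi) :
    minkIntervalSq (horizonEmbed σ φ) (horizonEmbed σ0 φ0) = 0
      ↔ ((σ * σ0 ≥ 0 ∧ φ = φ0) ∨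
          (σ * σ0 ≤ 0 ∧
            Real.tan σ = -(Real.cos σ0 / Real.sin σ0) * Real.sin ((φ - φ0) / 2) ^ 2)) := by
  obtain ⟨h0pos, h0lt⟩ := hσ0
  obtain ⟨hlo, hhi⟩ := hσ
  have hpi := Real.pi_pos
  have hcos0 : Real.cos σ0 > 0 := Real.cos_pos_of_mem_Ioo ⟨by linarith, h0lt⟩
  have hsin0 : Real.sin σ0 > 0 := Real.sin_pos_of_pos_of_lt_pi h0pos (by linarith)
  have ht0 : Real.tan σ0 > 0 := by
    rw [Real.tan_eq_sin_div_cos]; positivity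
  have habs0 : |Real.tan σ0| = Real.tan σ0 := abs_of_pos ht0
  have hcosσ : Real.cos σ > 0 := Real.cos_pos_of_mem_Ioo ⟨hlo, hhi⟩
  have hkey : (Real.cos φ - Real.cos φ0) ^ 2 + (Real.sin φ - Real.sin φ0) ^ 2
      = 4 * Real.sin ((φ - φ0) / 2) ^ 2 := by
    have h1 := Real.sin_sq_eq_half_sub ((φ - φ0) / 2)
    rw [show 2 * ((φ - φ0) / 2) = φ - φ0 by ring] at h1
    have h2 := Real.cos_sub φ φ0
    have h3 := Real.sin_sq_add_cos_sq φ
    have h4 := Real.sin_sq_add_cos_sq φ0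
    nlinarith [h1, h2, h3, h4]
  have habsφ := abs_lt.mp hφ
  have hszero : Real.sin ((φ - φ0) / 2) = 0 ↔ φ = φ0 := by
    rw [Real.sin_eq_zero_iff_of_lt_of_lt (by linarith) (by linarith)]
    constructor <;> intro h <;> linarith
  simp only [minkIntervalSq, horizonEmbed, Matrix.cons_val_zero, Matrix.cons_val_one,
    Matrix.head_cons, Matrix.cons_val_two, Matrix.tail_cons, Matrix.cons_val_three, habs0]
  rcases le_or_gt 0 σ with hσnn | hσneg
  · have hsinσ : Real.sin σ ≥ 0 := Real.sin_nonneg_of_nonneg_of_le_pi hσnn (by linarith)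
    have htσ : Real.tan σ ≥ 0 := by rw [Real.tan_eq_sin_div_cos]; positivity
    rw [abs_of_nonneg htσ]
    have hL : -(Real.tan σ - Real.tan σ0) ^ 2 + (Real.cos φ - Real.cos φ0) ^ 2 +
        (Real.sin φ - Real.sin φ0) ^ 2 + (Real.tan σ - Real.tan σ0) ^ 2
        = 4 * Real.sin ((φ - φ0) / 2) ^ 2 := by linear_combination hkey
    rw [hL]
    constructor
    · intro h
      left
      have hs : Real.sin ((φ - φ0) / 2) ^ 2 = 0 := by linarith
      exact ⟨mul_nonneg hσnn h0pos.le, hszero.mp (sq_eq_zero_iff.mp hs)⟩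
    · rintro (⟨-, h⟩ | ⟨hle, heq⟩)
      · have := hszero.mpr h; rw [this]; ring
      · have hσle : σ ≤ 0 := by
          by_contra hc
          push_neg at hc
          nlinarith [mul_pos hc h0pos]
        have hσ0' : σ = 0 := le_antisymm hσle hσnn
        have : Real.tan σ = 0 := by rw [hσ0', Real.tan_zero]
        rw [this] at heq
        have hs2 : Real.sin ((φ - φ0) / 2) ^ 2 = 0 := by
          by_contra hne
          have : Real.cos σ0 / Real.sin σ0 > 0 := by positivity
          have h2 : Real.sin ((φ - φ0) / 2) ^ 2 > 0 :=
            lt_of_le_of_ne (sq_nonneg _) (Ne.symm hne)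
          nlinarith
        linarith [hs2]
  · have hsinσ : Real.sin σ < 0 := Real.sin_neg_of_neg_of_neg_pi_lt hσneg (by linarith)
    have htσ : Real.tan σ < 0 := by
      rw [Real.tan_eq_sin_div_cos]; exact div_neg_of_neg_of_pos hsinσ hcosσ
    rw [abs_of_neg htσ]
    have hL : -(Real.tan σ - Real.tan σ0) ^ 2 + (Real.cos φ - Real.cos φ0) ^ 2 +
        (Real.sin φ - Real.sin φ0) ^ 2 + (-Real.tan σ - Real.tan σ0) ^ 2
        = 4 * Real.tan σ * Real.tan σ0 + 4 * Real.sin ((φ - φ0) / 2) ^ 2 := by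
      linear_combination hkey
    rw [hL]
    have hmul : σ * σ0 ≤ 0 := le_of_lt (mul_neg_of_neg_of_pos hσneg h0pos)
    have hiff : 4 * Real.tan σ * Real.tan σ0 + 4 * Real.sin ((φ - φ0) / 2) ^ 2 = 0
        ↔ Real.tan σ = -(Real.cos σ0 / Real.sin σ0) * Real.sin ((φ - φ0) / 2) ^ 2 := by
      have hc : Real.cos σ0 ≠ 0 := ne_of_gt hcos0
      have hs' : Real.sin σ0 ≠ 0 := ne_of_gt hsin0
      rw [Real.tan_eq_sin_div_cos σ0]
      constructor
      · intro h
        have h' : 4 * Real.tan σ * Real.sin σ0 + 4 * Real.sin ((φ - φ0) / 2) ^ 2 *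
            Real.cos σ0 = 0 := by
          have := mul_eq_zero_of_left h (Real.cos σ0)
          field_simp at this
          linarith [this]
        field_simp
        linarith [h']
      · intro h
        field_simp at h
        field_simp
        linarith [h]
    rw [hiff]
    constructor
    · intro h; exact Or.inr ⟨hmul, h⟩
    · rintro (⟨hge, -⟩ | ⟨-, h⟩)
      · exfalso; nlinarith [mul_neg_of_neg_of_pos hσneg h0pos]
      · exact h
end
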